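/- arXiv:1701.08783 — 5 statements merged into one kernel-verified Lean document; each statement's English description precedes it below -/
import Mathlib

section
/- For a real $p \in (0,1)$ and integer $A \ge 2$, $\sum_{k=1}^{A-1} \binom{A}{k} p^k (1-p)^{A-k} \cdot \frac{1}{A-k} \le \frac{2}{(1-p)A}$. -/
/-! Since `(A + 1 - k) · C(A+1, k) = (A + 1) · C(A, k)` and `A + 1 - k ≤ 2 (A - k)` for `k < A`,
each term is at most `2 / ((1 - p)(A + 1))` times the corresponding term of the binomial
distribution with parameters `A + 1` and `p`, whose total mass is `1`. -/

open Finset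

theorem Nat.choose_mul_succ_le_two_mul_choose_succ_mul_sub {n k : ℕ} (hk : k < n) :
    n.choose k * (n + 1) ≤ 2 * (n + 1).choose k * (n - k) := by
  rw [Nat.choose_mul_succ_eq, mul_comm 2, mul_assoc]
  exact Nat.mul_le_mul_left _ (by omega : n + 1 - k ≤ 2 * (n - k))

theorem sum_choose_mul_pow_mul_one_sub_pow_le_one {s : Finset ℕ} {n : ℕ} {p : ℝ}
    (hs : s ⊆ range (n + 1)) (hp0 : 0 ≤ p) (hp1 : p ≤ 1) :
    ∑ k ∈ s, (n.choose k : ℝ) * p ^ k * (1 - p) ^ (n - k) ≤ 1 := by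
  have hq : 0 ≤ 1 - p := by linarith
  calc ∑ k ∈ s, (n.choose k : ℝ) * p ^ k * (1 - p) ^ (n - k)
      ≤ ∑ k ∈ range (n + 1), (n.choose k : ℝ) * p ^ k * (1 - p) ^ (n - k) :=
        sum_le_sum_of_subset_of_nonneg hs fun _ _ _ => by positivity
    _ = (p + (1 - p)) ^ n := by
        rw [add_pow]
        exact sum_congr rfl fun _ _ => by ring
    _ = 1 := by rw [add_sub_cancel, one_pow]

theorem choose_mul_pow_div_sub_le {n k : ℕ} (hk : k < n) {p : ℝ} (hp0 : 0 ≤ p) (hp1 : p < 1) :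
    (n.choose k : ℝ) * p ^ k * (1 - p) ^ (n - k) * (1 / ((n - k : ℕ) : ℝ))
      ≤ 2 / ((1 - p) * (n + 1)) * ((n + 1).choose k * p ^ k * (1 - p) ^ (n + 1 - k)) := by
  have hq : 0 < 1 - p := by linarith
  have hnk : (0 : ℝ) < (n - k : ℕ) := by exact_mod_cast Nat.sub_pos_of_lt hk
  have hchoose : (n.choose k : ℝ) / (n - k : ℕ) ≤ 2 * (n + 1).choose k / (n + 1) := by
    rw [div_le_div_iff₀ hnk (by positivity)]
    exact_mod_cast Nat.choose_mul_succ_le_two_mul_choose_succ_mul_sub hk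
  rw [show n + 1 - k = n - k + 1 by omega, pow_succ]
  calc (n.choose k : ℝ) * p ^ k * (1 - p) ^ (n - k) * (1 / ((n - k : ℕ) : ℝ))
      = p ^ k * (1 - p) ^ (n - k) * ((n.choose k : ℝ) / (n - k : ℕ)) := by ring
    _ ≤ p ^ k * (1 - p) ^ (n - k) * (2 * (n + 1).choose k / (n + 1)) := by gcongr
    _ = _ := by field_simp

theorem stmt_1 (p : ℝ) (hp0 : 0 < p) (hp1 : p < 1) (A : ℕ) (hA : 2 ≤ A) :
    ∑ k ∈ Finset.Ico 1 A,
      (A.choose k : ℝ) * p ^ k * (1 - p) ^ (A - k) * (1 / ((A - k : ℕ) : ℝ))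
      ≤ 2 / ((1 - p) * A) := by
  have hq : 0 < 1 - p := by linarith
  have hApos : (0 : ℝ) < A := by exact_mod_cast (by omega : 0 < A)
  calc ∑ k ∈ Ico 1 A, (A.choose k : ℝ) * p ^ k * (1 - p) ^ (A - k) * (1 / ((A - k : ℕ) : ℝ))
      ≤ ∑ k ∈ Ico 1 A,
          2 / ((1 - p) * (A + 1)) * ((A + 1).choose k * p ^ k * (1 - p) ^ (A + 1 - k)) :=
        sum_le_sum fun k hk => choose_mul_pow_div_sub_le (mem_Ico.mp hk).2 hp0.le hp1
    _ = 2 / ((1 - p) * (A + 1)) *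
          ∑ k ∈ Ico 1 A, ((A + 1).choose k * p ^ k * (1 - p) ^ (A + 1 - k)) :=
        (mul_sum ..).symm
    _ ≤ 2 / ((1 - p) * (A + 1)) := by
        refine mul_le_of_le_one_right (by positivity) ?_
        exact_mod_cast sum_choose_mul_pow_mul_one_sub_pow_le_one
          (fun k hk => by simp only [mem_Ico, mem_range] at hk ⊢; omega) hp0.le hp1.le
    _ ≤ 2 / ((1 - p) * A) := by gcongr; linarith
end

section
/- Let $Q_x, Q_\star$ be strictly positive probability mass functions on a finite set $\mathcal{Y}$, and $Q_\lambda$ the normalized geometric mixture $Q_\lambda(y) \propto Q_x(y)^\lambda Q_\star(y)^{1-\lambda}$ for $\lambda \in [0,1]$. Then the function $\lambda \mapsto D(Q_\lambda \| Q_\star)$ is nondecreasing on $[0,1]$, and $\lambda \mapsto D(Q_\lambda \| Q_x)$ is nonincreasing on $[0,1]$. -/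
open Finset

/-- KL divergence nonnegativity (Gibbs' inequality). -/
lemma kl_nonneg' {Y : Type*} [Fintype Y] (p q : Y → ℝ)
    (hp : ∀ y, 0 < p y) (hq : ∀ y, 0 < q y)
    (hs : ∑ y, q y ≤ ∑ y, p y) :
    0 ≤ ∑ y, p y * Real.log (p y / q y) := by
  have h1 : ∑ y, p y * Real.log (q y / p y) ≤ ∑ y, (q y - p y) := by
    apply Finset.sum_le_sum
    intro y _
    have hlog := Real.log_le_sub_one_of_pos (div_pos (hq y) (hp y))
    have h := mul_le_mul_of_nonneg_left hlog (le_of_lt (hp y))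
    calc p y * Real.log (q y / p y) ≤ p y * (q y / p y - 1) := h
      _ = q y - p y := by
          rw [mul_sub, mul_one, mul_comm, div_mul_cancel₀ _ (hp y).ne']
  have h2 : ∑ y, (q y - p y) ≤ 0 := by
    rw [Finset.sum_sub_distrib]; linarith
  have h3 : ∑ y, p y * Real.log (p y / q y) = -∑ y, p y * Real.log (q y / p y) := by
    rw [← Finset.sum_neg_distrib]
    apply Finset.sum_congr rfl
    intro y _
    rw [Real.log_div (ne_of_gt (hp y)) (ne_of_gt (hq y)),
        Real.log_div (ne_of_gt (hq y)) (ne_of_gt (hp y))]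
    ring
  linarith

/-- Weighted Chebyshev sum inequality. -/
lemma cheb' {Y : Type*} [Fintype Y] (w T g : Y → ℝ)
    (hw : ∀ y, 0 ≤ w y)
    (h : ∀ y z, 0 ≤ (T y - T z) * (g y - g z)) :
    (∑ y, w y * T y) * (∑ y, w y * g y) ≤ (∑ y, w y * (T y * g y)) * (∑ y, w y) := by
  have key : 0 ≤ ∑ y, ∑ z, w y * w z * ((T y - T z) * (g y - g z)) := by
    apply Finset.sum_nonneg; intro y _
    apply Finset.sum_nonneg; intro z _
    exact mul_nonneg (mul_nonneg (hw y) (hw z)) (h y z)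
  have expand : ∑ y, ∑ z, w y * w z * ((T y - T z) * (g y - g z))
      = 2 * ((∑ y, w y * (T y * g y)) * (∑ y, w y))
        - 2 * ((∑ y, w y * T y) * (∑ y, w y * g y)) := by
    have e1 : ∀ y : Y, ∑ z, w y * w z * ((T y - T z) * (g y - g z))
        = (w y * (T y * g y)) * (∑ z, w z) - (w y * T y) * (∑ z, w z * g z)
          - (w y * g y) * (∑ z, w z * T z) + w y * (∑ z, w z * (T z * g z)) := by
      intro y
      rw [Finset.mul_sum, Finset.mul_sum, Finset.mul_sum, Finset.mul_sum]
      rw [← Finset.sum_sub_distrib, ← Finset.sum_sub_distrib, ← Finset.sum_add_distrib]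
      apply Finset.sum_congr rfl
      intro z _; ring
    rw [Finset.sum_congr rfl (fun y _ => e1 y)]
    rw [Finset.sum_add_distrib, Finset.sum_sub_distrib, Finset.sum_sub_distrib,
        ← Finset.sum_mul, ← Finset.sum_mul, ← Finset.sum_mul, ← Finset.sum_mul]
    ring
  linarith [expand ▸ key]

theorem stmt_7 {Y : Type*} [Fintype Y] (Qx Qs : Y → ℝ)
    (hQx : ∀ y, 0 < Qx y) (hQs : ∀ y, 0 < Qs y)
    (hQx1 : ∑ y, Qx y = 1) (hQs1 : ∑ y, Qs y = 1)
    (Qlam : ℝ → Y → ℝ)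
    (hQlam : ∀ l y, Qlam l y =
      Qx y ^ l * Qs y ^ (1 - l) / ∑ y', Qx y' ^ l * Qs y' ^ (1 - l)) :
    MonotoneOn (fun l => ∑ y, Qlam l y * Real.log (Qlam l y / Qs y)) (Set.Icc 0 1) ∧
    AntitoneOn (fun l => ∑ y, Qlam l y * Real.log (Qlam l y / Qx y)) (Set.Icc 0 1) := by
  have hne : Nonempty Y := by
    rcases isEmpty_or_nonempty Y with h | h
    · rw [Finset.univ_eq_empty, Finset.sum_empty] at hQs1; norm_num at hQs1
    · exact h
  set T : Y → ℝ := fun y => Real.log (Qx y) - Real.log (Qs y) with hT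
  set u : ℝ → Y → ℝ := fun l y => Qx y ^ l * Qs y ^ (1 - l) with hu
  have hu_exp : ∀ l y, u l y = Real.exp (l * T y) * Qs y := by
    intro l y
    have h1 : u l y = Real.exp (Real.log (Qx y) * l + Real.log (Qs y) * (1 - l)) := by
      simp only [hu]
      rw [Real.rpow_def_of_pos (hQx y), Real.rpow_def_of_pos (hQs y), Real.exp_add]
    rw [h1, show Real.log (Qx y) * l + Real.log (Qs y) * (1 - l)
        = l * T y + Real.log (Qs y) from by simp only [hT]; ring,
      Real.exp_add, Real.exp_log (hQs y)]
  have hu_pos : ∀ l y, 0 < u l y := by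
    intro l y; rw [hu_exp]; exact mul_pos (Real.exp_pos _) (hQs y)
  set Z : ℝ → ℝ := fun l => ∑ y, u l y with hZ
  have hZ_pos : ∀ l, 0 < Z l := fun l =>
    Finset.sum_pos (fun y _ => hu_pos l y) Finset.univ_nonempty
  have hQlam' : ∀ l y, Qlam l y = u l y / Z l := by
    intro l y; rw [hQlam]
  have hQpos : ∀ l y, 0 < Qlam l y := by
    intro l y; rw [hQlam']; exact div_pos (hu_pos l y) (hZ_pos l)
  have hQsum : ∀ l, ∑ y, Qlam l y = 1 := by
    intro l
    rw [Finset.sum_congr rfl (fun y _ => hQlam' l y), ← Finset.sum_div,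
        div_self (ne_of_gt (hZ_pos l))]
  have hlog : ∀ l y, Real.log (Qlam l y) = l * T y + Real.log (Qs y) - Real.log (Z l) := by
    intro l y
    rw [hQlam', Real.log_div (ne_of_gt (hu_pos l y)) (ne_of_gt (hZ_pos l)),
        hu_exp, Real.log_mul (Real.exp_ne_zero _) (ne_of_gt (hQs y)), Real.log_exp]
  -- monotonicity of the tilted mean S l = ∑ Qlam l y * T y
  have hS_mono : ∀ a b : ℝ, a ≤ b → (∑ y, Qlam a y * T y) ≤ ∑ y, Qlam b y * T y := by
    intro a b hab
    have hrw : ∀ l, ∑ y, Qlam l y * T y = (∑ y, u l y * T y) / Z l := by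
      intro l
      rw [Finset.sum_div]
      apply Finset.sum_congr rfl
      intro y _
      rw [hQlam']; ring
    rw [hrw a, hrw b, div_le_div_iff₀ (hZ_pos a) (hZ_pos b)]
    set g : Y → ℝ := fun y => Real.exp ((b - a) * T y) with hg
    have hub : ∀ y, u b y = u a y * g y := by
      intro y
      simp only [hg]
      rw [hu_exp, hu_exp, show b * T y = a * T y + (b - a) * T y from by ring,
          Real.exp_add]
      ring
    have hmono : ∀ y z, 0 ≤ (T y - T z) * (g y - g z) := by
      intro y z
      have hgmono : ∀ v w' : Y, T v ≤ T w' → g v ≤ g w' := by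
        intro v w' hvw
        simp only [hg]
        exact Real.exp_le_exp.2 (mul_le_mul_of_nonneg_left hvw (by linarith))
      rcases le_total (T y) (T z) with h | h
      · have h2 := hgmono y z h
        nlinarith [mul_nonneg (sub_nonneg.2 h) (sub_nonneg.2 h2)]
      · have h2 := hgmono z y h
        nlinarith [mul_nonneg (sub_nonneg.2 h) (sub_nonneg.2 h2)]
    have hch := cheb' (u a) T g (fun y => le_of_lt (hu_pos a y)) hmono
    calc (∑ y, u a y * T y) * Z b
        = (∑ y, u a y * T y) * (∑ y, u a y * g y) := by
          congr 1
          apply Finset.sum_congr rfl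
          intro y _; rw [hub]
      _ ≤ (∑ y, u a y * (T y * g y)) * (∑ y, u a y) := hch
      _ = (∑ y, u b y * T y) * Z a := by
          congr 1
          apply Finset.sum_congr rfl
          intro y _; rw [hub]; ring
  -- KL between two tilts, in closed form
  have hKL : ∀ a b : ℝ,
      0 ≤ (a - b) * (∑ y, Qlam a y * T y) - (Real.log (Z a) - Real.log (Z b)) := by
    intro a b
    have h0 := kl_nonneg' (Qlam a) (Qlam b) (hQpos a) (hQpos b)
      (by rw [hQsum, hQsum])
    have hid : ∑ y, Qlam a y * Real.log (Qlam a y / Qlam b y)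
        = (a - b) * (∑ y, Qlam a y * T y)
          - (Real.log (Z a) - Real.log (Z b)) * (∑ y, Qlam a y) := by
      have e : ∀ y, Qlam a y * Real.log (Qlam a y / Qlam b y)
          = (a - b) * (Qlam a y * T y)
            - (Real.log (Z a) - Real.log (Z b)) * Qlam a y := by
        intro y
        rw [Real.log_div (ne_of_gt (hQpos a y)) (ne_of_gt (hQpos b y)), hlog, hlog]
        ring
      rw [Finset.sum_congr rfl (fun y _ => e y), Finset.sum_sub_distrib,
          ← Finset.mul_sum, ← Finset.mul_sum]
    rw [hid, hQsum, mul_one] at h0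
    exact h0
  -- divergence identities
  have hD1 : ∀ l, ∑ y, Qlam l y * Real.log (Qlam l y / Qs y)
      = l * (∑ y, Qlam l y * T y) - Real.log (Z l) := by
    intro l
    have e : ∀ y, Qlam l y * Real.log (Qlam l y / Qs y)
        = l * (Qlam l y * T y) - Real.log (Z l) * Qlam l y := by
      intro y
      rw [Real.log_div (ne_of_gt (hQpos l y)) (ne_of_gt (hQs y)), hlog]
      ring
    rw [Finset.sum_congr rfl (fun y _ => e y), Finset.sum_sub_distrib,
        ← Finset.mul_sum, ← Finset.mul_sum, hQsum, mul_one]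
  have hD2 : ∀ l, ∑ y, Qlam l y * Real.log (Qlam l y / Qx y)
      = (l - 1) * (∑ y, Qlam l y * T y) - Real.log (Z l) := by
    intro l
    have e : ∀ y, Qlam l y * Real.log (Qlam l y / Qx y)
        = (l - 1) * (Qlam l y * T y) - Real.log (Z l) * Qlam l y := by
      intro y
      rw [Real.log_div (ne_of_gt (hQpos l y)) (ne_of_gt (hQx y)), hlog]
      simp only [hT]
      ring
    rw [Finset.sum_congr rfl (fun y _ => e y), Finset.sum_sub_distrib,
        ← Finset.mul_sum, ← Finset.mul_sum, hQsum, mul_one]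
  constructor
  · intro a ha b hb hab
    simp only
    rw [hD1 a, hD1 b]
    have h1 := hKL b a
    have h2 := hS_mono a b hab
    nlinarith [mul_nonneg ha.1 (sub_nonneg.2 h2)]
  · intro a ha b hb hab
    simp only
    rw [hD2 a, hD2 b]
    have h1 := hKL a b
    have h2 := hS_mono a b hab
    nlinarith [mul_nonneg (sub_nonneg.2 hb.2) (sub_nonneg.2 h2)]
end

section
/- Let $P_1, P_2$ be strictly positive probability mass functions on a finite set $\mathcal{Y}$, let $P_1^n, P_2^n$ denote the corresponding $n$-fold product measures on $\mathcal{Y}^n$, and let $A \subseteq \mathcal{Y}^n$ satisfy $P_1^n(A) \ge \alpha$ for some $\alpha > 0$. Then $P_2^n(A) \ge \frac{\alpha}{2} \exp\left(-\frac{n D(P_1\|P_2) + \sqrt{2 n V / \alpha}}{1}\right)$ in the weak form; in particular, for every $\epsilon > 0$ and all sufficiently large $n$, $P_2^n(A) \ge \frac{\alpha}{2} e^{-n(D(P_1\|P_2)+\epsilon)}$. -/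
/-!
With `ℓ = log (P₁ / P₂)` and `L(yⁿ) = ∑ᵢ ℓ(yᵢ)` one has `P₂ⁿ = e^{-L} P₁ⁿ`, so `P₂ⁿ ≥ e^{-τ} P₁ⁿ`
wherever `L ≤ τ`; take `τ = n (D + ε)`. By a Chernoff bound `P₁ⁿ(L > τ) ≤ rⁿ` with
`r = E_{P₁} e^{t (ℓ - D - ε)}`, and `r < 1` for small `t > 0` because this exponential moment equals
`1` at `t = 0` with derivative `-ε` there. Hence for large `n` the part of `A` where `L ≤ τ` keeps
`P₁ⁿ`-mass at least `α / 2`.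
-/

open Finset Real Filter Topology

section

variable {Y : Type*}

lemma prod_mul_exp_neg_sum_le_prod {n : ℕ} {p q g : Y → ℝ} (hp : ∀ y, 0 ≤ p y)
    (hpq : ∀ y, p y * exp (-g y) ≤ q y) (yn : Fin n → Y) :
    (∏ i, p (yn i)) * exp (-∑ i, g (yn i)) ≤ ∏ i, q (yn i) := by
  rw [← sum_neg_distrib, exp_sum, ← prod_mul_distrib]
  exact prod_le_prod (fun i _ => mul_nonneg (hp _) (exp_pos _).le) fun i _ => hpq _

lemma exp_neg_mul_sub_le_sum_prod [Fintype Y] {n : ℕ} {p q g : Y → ℝ} (hp : ∀ y, 0 ≤ p y)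
    (hpq : ∀ y, p y * exp (-g y) ≤ q y) (τ : ℝ) (A : Finset (Fin n → Y)) :
    exp (-τ) * (∑ yn ∈ A, ∏ i, p (yn i) -
        ∑ yn : Fin n → Y with τ < ∑ i, g (yn i), ∏ i, p (yn i)) ≤
      ∑ yn ∈ A, ∏ i, q (yn i) := by
  have hq : ∀ y, 0 ≤ q y := fun y => (mul_nonneg (hp y) (exp_pos _).le).trans (hpq y)
  have htail : ∑ yn ∈ A with τ < ∑ i, g (yn i), ∏ i, p (yn i) ≤
      ∑ yn : Fin n → Y with τ < ∑ i, g (yn i), ∏ i, p (yn i) :=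
    sum_le_sum_of_subset_of_nonneg (filter_subset_filter _ (subset_univ A))
      fun yn _ _ => prod_nonneg fun i _ => hp _
  have hgood : ∀ yn ∈ A.filter (fun yn => ¬ τ < ∑ i, g (yn i)),
      exp (-τ) * ∏ i, p (yn i) ≤ ∏ i, q (yn i) := by
    intro yn hyn
    refine le_trans ?_ (prod_mul_exp_neg_sum_le_prod hp hpq yn)
    rw [mul_comm]
    exact mul_le_mul_of_nonneg_left (exp_le_exp.2 (neg_le_neg (not_lt.1 (mem_filter.1 hyn).2)))
      (prod_nonneg fun i _ => hp _)
  calc exp (-τ) * (∑ yn ∈ A, ∏ i, p (yn i) -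
          ∑ yn : Fin n → Y with τ < ∑ i, g (yn i), ∏ i, p (yn i))
      ≤ exp (-τ) * ∑ yn ∈ A with ¬ τ < ∑ i, g (yn i), ∏ i, p (yn i) := by
        rw [← sum_filter_add_sum_filter_not A (fun yn => τ < ∑ i, g (yn i))]
        gcongr
        linarith
    _ ≤ ∑ yn ∈ A with ¬ τ < ∑ i, g (yn i), ∏ i, q (yn i) := by
        rw [mul_sum]
        exact sum_le_sum hgood
    _ ≤ ∑ yn ∈ A, ∏ i, q (yn i) :=
        sum_le_sum_of_subset_of_nonneg (filter_subset _ _)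
          fun yn _ _ => prod_nonneg fun i _ => hq _

lemma sum_prod_filter_lt_sum_le_pow [Fintype Y] {p : Y → ℝ} (hp : ∀ y, 0 ≤ p y) (g : Y → ℝ) {t : ℝ}
    (ht : 0 ≤ t) (c : ℝ) (n : ℕ) :
    ∑ yn : Fin n → Y with n * c < ∑ i, g (yn i), ∏ i, p (yn i) ≤
      (∑ y, p y * exp (t * (g y - c))) ^ n := by
  have hweight : ∀ yn : Fin n → Y, ∏ i, (p (yn i) * exp (t * (g (yn i) - c))) =
      (∏ i, p (yn i)) * exp (t * (∑ i, g (yn i) - n * c)) := by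
    intro yn
    rw [prod_mul_distrib, ← exp_sum, ← mul_sum, sum_sub_distrib, sum_const, card_univ,
      Fintype.card_fin, nsmul_eq_mul]
  rw [sum_pow', Fintype.piFinset_univ]
  calc ∑ yn : Fin n → Y with n * c < ∑ i, g (yn i), ∏ i, p (yn i)
      ≤ ∑ yn : Fin n → Y with n * c < ∑ i, g (yn i),
          ∏ i, (p (yn i) * exp (t * (g (yn i) - c))) := by
        refine sum_le_sum fun yn hyn => ?_
        rw [hweight]
        exact le_mul_of_one_le_right (prod_nonneg fun i _ => hp _)
          (one_le_exp (mul_nonneg ht (sub_nonneg.2 (mem_filter.1 hyn).2.le)))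
    _ ≤ ∑ yn : Fin n → Y, ∏ i, (p (yn i) * exp (t * (g (yn i) - c))) :=
        sum_le_sum_of_subset_of_nonneg (filter_subset _ _) fun yn _ _ =>
          prod_nonneg fun i _ => mul_nonneg (hp _) (exp_pos _).le

lemma exists_pos_sum_mul_exp_lt_one [Fintype Y] {p : Y → ℝ} (hp : ∑ y, p y = 1) (g : Y → ℝ) {δ : ℝ}
    (hδ : 0 < δ) : ∃ t > 0, ∑ y, p y * exp (t * (g y - (∑ y, p y * g y + δ))) < 1 := by
  set c := ∑ y, p y * g y + δ
  set M : ℝ → ℝ := fun t => ∑ y, p y * exp (t * (g y - c))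
  have hM0 : M 0 = 1 := by simp [M, hp]
  have hderiv : HasDerivAt M (-δ) 0 := by
    have hterm : ∀ y, HasDerivAt (fun t => p y * exp (t * (g y - c))) (p y * (g y - c)) 0 := by
      intro y
      simpa using (((hasDerivAt_id 0).mul_const (g y - c)).exp.const_mul (p y))
    refine (HasDerivAt.fun_sum fun y _ => hterm y).congr_deriv ?_
    simp only [mul_sub, sum_sub_distrib, ← sum_mul, hp, c]
    ring
  obtain ⟨t, hslope, ht⟩ := ((hderiv.hasDerivWithinAt (s := Set.Ioi 0)).limsup_slope_le'
    (lt_irrefl 0) (neg_neg_of_pos hδ)).and self_mem_nhdsWithin |>.exists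
  refine ⟨t, ht, ?_⟩
  rw [slope_def_field, hM0, sub_zero, div_lt_iff₀ ht, zero_mul] at hslope
  linarith

end

theorem stmt_10_general {Y : Type*} [Fintype Y] (P1 P2 : Y → ℝ)
    (h1 : ∀ y, 0 < P1 y) (h2 : ∀ y, 0 < P2 y)
    (hs1 : ∑ y, P1 y = 1)
    (α : ℝ) (hα : 0 < α) (ε : ℝ) (hε : 0 < ε) :
    ∃ N : ℕ, ∀ n ≥ N, ∀ A : Finset (Fin n → Y),
      α ≤ ∑ yn ∈ A, ∏ i, P1 (yn i) →
      α / 2 * Real.exp (-(n : ℝ) * ((∑ y, P1 y * Real.log (P1 y / P2 y)) + ε))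
        ≤ ∑ yn ∈ A, ∏ i, P2 (yn i) := by
  set D := ∑ y, P1 y * log (P1 y / P2 y)
  obtain ⟨t, ht, hr⟩ := exists_pos_sum_mul_exp_lt_one hs1 (fun y => log (P1 y / P2 y)) hε
  have hr0 : 0 ≤ ∑ y, P1 y * exp (t * (log (P1 y / P2 y) - (D + ε))) :=
    sum_nonneg fun y _ => mul_nonneg (h1 y).le (exp_pos _).le
  obtain ⟨N, hN⟩ := ((tendsto_pow_atTop_nhds_zero_of_lt_one hr0 hr).eventually
    (eventually_le_nhds (half_pos hα))).exists_forall_of_atTop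
  refine ⟨N, fun n hn A hA => ?_⟩
  have hP2 : ∀ y, P1 y * exp (-log (P1 y / P2 y)) ≤ P2 y := fun y => by
    rw [exp_neg, exp_log (div_pos (h1 y) (h2 y)), inv_div, mul_div_cancel₀ _ (h1 y).ne']
  calc α / 2 * exp (-(n : ℝ) * (D + ε))
      ≤ exp (-(n * (D + ε))) * (∑ yn ∈ A, ∏ i, P1 (yn i) -
          ∑ yn : Fin n → Y with n * (D + ε) < ∑ i, log (P1 (yn i) / P2 (yn i)),
            ∏ i, P1 (yn i)) := by
        rw [neg_mul, mul_comm]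
        gcongr
        linarith [hN n hn, sum_prod_filter_lt_sum_le_pow (fun y => (h1 y).le)
          (fun y => log (P1 y / P2 y)) ht.le (D + ε) n]
    _ ≤ ∑ yn ∈ A, ∏ i, P2 (yn i) := exp_neg_mul_sub_le_sum_prod (fun y => (h1 y).le) hP2 _ A

theorem stmt_10 {Y : Type*} [Fintype Y] (P1 P2 : Y → ℝ)
    (h1 : ∀ y, 0 < P1 y) (h2 : ∀ y, 0 < P2 y)
    (hs1 : ∑ y, P1 y = 1) (hs2 : ∑ y, P2 y = 1)
    (α : ℝ) (hα : 0 < α) (ε : ℝ) (hε : 0 < ε) :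
    ∃ N : ℕ, ∀ n ≥ N, ∀ A : Finset (Fin n → Y),
      α ≤ ∑ yn ∈ A, ∏ i, P1 (yn i) →
      α / 2 * Real.exp (-(n : ℝ) * ((∑ y, P1 y * Real.log (P1 y / P2 y)) + ε))
        ≤ ∑ yn ∈ A, ∏ i, P2 (yn i) :=
  stmt_10_general P1 P2 h1 h2 hs1 α hα ε hε
end

section
/- Let $Q_x, Q_\star$ be strictly positive probability mass functions on finite $\mathcal{Y}$, fix $T \in [-D(Q_\star\|Q_x), D(Q_x\|Q_\star)]$, and let $\lambda \in [0,1]$ satisfy $D(Q_\lambda\|Q_\star) - D(Q_\lambda\|Q_x) = T$. Then for every probability mass function $V$ on $\mathcal{Y}$ with $D(V\|Q_\star) - D(V\|Q_x) \le T$, we have $D(V\|Q_x) \ge D(Q_\lambda\|Q_x)$. -/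
/-- Kullback–Leibler divergence between two pmfs on a finite set. -/
noncomputable def klDiv {Y : Type*} [Fintype Y] (P Q : Y → ℝ) : ℝ :=
  ∑ y, P y * Real.log (P y / Q y)

/-- Gibbs' inequality: nonnegativity of KL divergence. -/
lemma gibbs {Y : Type*} [Fintype Y] (P Q : Y → ℝ)
    (hP : ∀ y, 0 ≤ P y) (hQ : ∀ y, 0 < Q y)
    (hP1 : ∑ y, P y = 1) (hQ1 : ∑ y, Q y ≤ 1) : 0 ≤ klDiv P Q := by
  have h : ∀ y, P y * Real.log (Q y / P y) ≤ Q y - P y := by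
    intro y
    rcases eq_or_lt_of_le (hP y) with h0 | h0
    · simp [← h0, (hQ y).le]
    · have hpos : 0 < Q y / P y := div_pos (hQ y) h0
      have := Real.log_le_sub_one_of_pos hpos
      calc P y * Real.log (Q y / P y) ≤ P y * (Q y / P y - 1) := by
            exact mul_le_mul_of_nonneg_left this (hP y)
        _ = Q y - P y := by field_simp
  have hsum : ∑ y, P y * Real.log (Q y / P y) ≤ 0 := by
    calc ∑ y, P y * Real.log (Q y / P y) ≤ ∑ y, (Q y - P y) :=
          Finset.sum_le_sum (fun y _ => h y)
      _ = (∑ y, Q y) - 1 := by rw [Finset.sum_sub_distrib, hP1]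
      _ ≤ 0 := by linarith
  have : klDiv P Q = -∑ y, P y * Real.log (Q y / P y) := by
    rw [klDiv, ← Finset.sum_neg_distrib]
    refine Finset.sum_congr rfl fun y _ => ?_
    rcases eq_or_lt_of_le (hP y) with h0 | h0
    · simp [← h0]
    · rw [Real.log_div (hQ y).ne' h0.ne', Real.log_div h0.ne' (hQ y).ne']; ring
  linarith [this, hsum]

theorem stmt_14 {Y : Type*} [Fintype Y] (Qx Qs : Y → ℝ)
    (hQx : ∀ y, 0 < Qx y) (hQs : ∀ y, 0 < Qs y)
    (hQx1 : ∑ y, Qx y = 1) (hQs1 : ∑ y, Qs y = 1)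
    (T : ℝ) (hT1 : -(klDiv Qs Qx) ≤ T) (hT2 : T ≤ klDiv Qx Qs)
    (l : ℝ) (hl : l ∈ Set.Icc (0:ℝ) 1)
    (Qlam : Y → ℝ)
    (hQlam : ∀ y, Qlam y =
      Qx y ^ l * Qs y ^ (1 - l) / ∑ y', Qx y' ^ l * Qs y' ^ (1 - l))
    (hT : klDiv Qlam Qs - klDiv Qlam Qx = T)
    (V : Y → ℝ) (hV : ∀ y, 0 ≤ V y) (hV1 : ∑ y, V y = 1)
    (hVc : klDiv V Qs - klDiv V Qx ≤ T) :
    klDiv Qlam Qx ≤ klDiv V Qx := by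
  obtain ⟨hl0, hl1⟩ := hl
  cases isEmpty_or_nonempty Y with
  | inl h => simp at hV1
  | inr h => ?_
  set Z : ℝ := ∑ y', Qx y' ^ l * Qs y' ^ (1 - l) with hZ
  have hZpos : 0 < Z := by
    apply Finset.sum_pos (fun y _ => ?_) Finset.univ_nonempty
    exact mul_pos (Real.rpow_pos_of_pos (hQx y) l) (Real.rpow_pos_of_pos (hQs y) (1 - l))
  have hQlpos : ∀ y, 0 < Qlam y := fun y => by
    rw [hQlam y]
    exact div_pos (mul_pos (Real.rpow_pos_of_pos (hQx y) l)
      (Real.rpow_pos_of_pos (hQs y) (1 - l))) hZpos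
  have hQl1 : ∑ y, Qlam y = 1 := by
    simp only [hQlam]
    rw [← Finset.sum_div, ← hZ, div_self hZpos.ne']
  have hlogQl : ∀ y, Real.log (Qlam y) =
      l * Real.log (Qx y) + (1 - l) * Real.log (Qs y) - Real.log Z := by
    intro y
    rw [hQlam y, Real.log_div (mul_pos (Real.rpow_pos_of_pos (hQx y) l)
        (Real.rpow_pos_of_pos (hQs y) (1 - l))).ne' hZpos.ne',
      Real.log_mul (Real.rpow_pos_of_pos (hQx y) l).ne'
        (Real.rpow_pos_of_pos (hQs y) (1 - l)).ne',
      Real.log_rpow (hQx y), Real.log_rpow (hQs y)]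
  -- key identity for any pmf W
  have key : ∀ W : Y → ℝ, (∀ y, 0 ≤ W y) → (∑ y, W y = 1) →
      klDiv W Qx = klDiv W Qlam - (1 - l) * (klDiv W Qs - klDiv W Qx) - Real.log Z := by
    intro W hW hW1
    have hterm : ∀ y, W y * Real.log (W y / Qx y) =
        W y * Real.log (W y / Qlam y)
          - (1 - l) * (W y * Real.log (W y / Qs y) - W y * Real.log (W y / Qx y))
          - W y * Real.log Z := by
      intro y
      rcases eq_or_lt_of_le (hW y) with h0 | h0
      · simp [← h0]
      · rw [Real.log_div h0.ne' (hQx y).ne', Real.log_div h0.ne' (hQs y).ne',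
          Real.log_div h0.ne' (hQlpos y).ne', hlogQl y]
        ring
    have : klDiv W Qx = ∑ y, (W y * Real.log (W y / Qlam y)
        - (1 - l) * (W y * Real.log (W y / Qs y) - W y * Real.log (W y / Qx y))
        - W y * Real.log Z) := Finset.sum_congr rfl fun y _ => hterm y
    calc klDiv W Qx = ∑ y, (W y * Real.log (W y / Qlam y)
          - (1 - l) * (W y * Real.log (W y / Qs y) - W y * Real.log (W y / Qx y))
          - W y * Real.log Z) := this
      _ = (∑ y, W y * Real.log (W y / Qlam y))
          - (1 - l) * ((∑ y, W y * Real.log (W y / Qs y))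
            - ∑ y, W y * Real.log (W y / Qx y))
          - (∑ y, W y) * Real.log Z := by
            rw [Finset.sum_sub_distrib, Finset.sum_sub_distrib, ← Finset.mul_sum,
              ← Finset.sum_mul, Finset.sum_sub_distrib]
      _ = _ := by rw [hW1, one_mul]; rfl
  have hQlself : klDiv Qlam Qlam = 0 := by
    apply Finset.sum_eq_zero
    intro y _
    rw [div_self (hQlpos y).ne', Real.log_one, mul_zero]
  have h1 : klDiv Qlam Qx = -(1 - l) * T - Real.log Z := by
    have := key Qlam (fun y => (hQlpos y).le) hQl1
    rw [hQlself, hT] at this; linarith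
  have h2 := key V hV hV1
  have hgibbs : 0 ≤ klDiv V Qlam := gibbs V Qlam hV hQlpos hV1 hQl1.le
  have : (1 - l) * (klDiv V Qs - klDiv V Qx) ≤ (1 - l) * T :=
    mul_le_mul_of_nonneg_left hVc (by linarith)
  linarith
end

section
/- For $p \in (0,1)$ and integers $1 \le k \le A-1$ and reals $a, b \ge 0$, the following lower bound holds: $\sum_{k=1}^{A-1}\binom{A}{k}p^k(1-p)^{A-k}\left(1 - \frac{a}{k}\right)\left(1 - \frac{b}{A-k}\right) \ge 1 - (1-p)^A - p^A - \frac{2a}{pA} - \frac{2b}{(1-p)A}$. -/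
/-!
Write `w k = C(A,k) p^k (1-p)^(A-k)` for the binomial weights. Since
`(1 - x)(1 - y) ≥ 1 - x - y` for `x, y ≥ 0`, the sum is at least
`∑ w k - a ∑ w k / k - b ∑ w k / (A - k)`. The weights over `1 ≤ k ≤ A - 1` sum to
`1 - (1-p)^A - p^A`. For the harmonic sums, `w k / (k + 1)` is `1 / (p (A + 1))` times a
binomial weight of order `A + 1`, so `∑ w k / (k + 1) ≤ 1 / (p (A + 1))`, and `1 / k ≤ 2 / (k + 1)`
gives `∑ w k / k ≤ 2 / (p A)`; the sum with `1 / (A - k)` is the same one for `1 - p`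
after the reflection `k ↦ A - k`.
-/

open Finset

noncomputable section

def binomialWeight (n : ℕ) (p : ℝ) (k : ℕ) : ℝ :=
  n.choose k * p ^ k * (1 - p) ^ (n - k)

namespace binomialWeight

variable {n : ℕ} {p : ℝ}

lemma nonneg (hp0 : 0 ≤ p) (hp1 : p ≤ 1) (k : ℕ) : 0 ≤ binomialWeight n p k := by
  have : 0 ≤ 1 - p := by linarith
  unfold binomialWeight
  positivity

lemma sum_range (n : ℕ) (p : ℝ) : ∑ k ∈ range (n + 1), binomialWeight n p k = 1 := by
  have h := (add_pow p (1 - p) n).symm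
  rw [add_sub_cancel, one_pow] at h
  rw [← h]
  exact sum_congr rfl fun k _ => by unfold binomialWeight; ring

lemma sum_Ico_one (hn : 0 < n) (p : ℝ) :
    ∑ k ∈ Ico 1 n, binomialWeight n p k = 1 - (1 - p) ^ n - p ^ n := by
  have h := sum_range n p
  rw [range_eq_Ico, sum_eq_sum_Ico_succ_bot (by omega), sum_Ico_succ_top hn] at h
  have h0 : binomialWeight n p 0 = (1 - p) ^ n := by simp [binomialWeight]
  have hn' : binomialWeight n p n = p ^ n := by simp [binomialWeight]
  rw [h0, hn'] at h
  linarith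

/-- Absorption `(n + 1) C(n, k) = (k + 1) C(n + 1, k + 1)`. -/
lemma div_succ_eq (hp : p ≠ 0) (k : ℕ) :
    binomialWeight n p k / (k + 1) = binomialWeight (n + 1) p (k + 1) / (p * (n + 1)) := by
  have habs : ((n + 1 : ℕ) : ℝ) * n.choose k = (n + 1).choose (k + 1) * (k + 1 : ℕ) := by
    exact_mod_cast Nat.add_one_mul_choose_eq n k
  push_cast at habs
  unfold binomialWeight
  rw [Nat.add_sub_add_right]
  field_simp
  linear_combination p ^ (k + 1) * (1 - p) ^ (n - k) * habs

lemma sum_div_succ_le (hp0 : 0 < p) (hp1 : p ≤ 1) (n : ℕ) :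
    ∑ k ∈ range (n + 1), binomialWeight n p k / (k + 1) ≤ 1 / (p * (n + 1)) := by
  simp_rw [div_succ_eq hp0.ne', ← sum_div]
  gcongr
  calc ∑ k ∈ range (n + 1), binomialWeight (n + 1) p (k + 1)
      ≤ ∑ k ∈ range (n + 2), binomialWeight (n + 1) p k := by
        rw [sum_range_succ' _ (n + 1)]
        exact le_add_of_nonneg_right (nonneg hp0.le hp1 0)
    _ = 1 := sum_range (n + 1) p

lemma sum_Ico_div_le (hp0 : 0 < p) (hp1 : p ≤ 1) (n : ℕ) :
    ∑ k ∈ Ico 1 n, binomialWeight n p k / k ≤ 2 / (p * n) := by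
  rcases Nat.eq_zero_or_pos n with rfl | hn
  · simp
  calc ∑ k ∈ Ico 1 n, binomialWeight n p k / k
      ≤ ∑ k ∈ Ico 1 n, 2 * (binomialWeight n p k / (k + 1)) := by
        refine sum_le_sum fun k hk => ?_
        have hk : (1 : ℝ) ≤ k := by exact_mod_cast (mem_Ico.mp hk).1
        rw [mul_div_assoc', div_le_div_iff₀ (by linarith) (by linarith)]
        nlinarith [nonneg (n := n) hp0.le hp1 k]
    _ ≤ ∑ k ∈ range (n + 1), 2 * (binomialWeight n p k / (k + 1)) := by
        refine sum_le_sum_of_subset_of_nonneg (fun k hk => ?_) (fun k _ _ => ?_)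
        · simp only [mem_Ico, mem_range] at hk ⊢; omega
        · have := nonneg (n := n) hp0.le hp1 k; positivity
    _ ≤ 2 * (1 / (p * (n + 1))) := by
        rw [← mul_sum]
        gcongr
        exact sum_div_succ_le hp0 hp1 n
    _ ≤ 2 / (p * n) := by
        rw [mul_one_div]
        gcongr
        linarith

lemma sum_Ico_div_sub_eq (n : ℕ) (p : ℝ) :
    ∑ k ∈ Ico 1 n, binomialWeight n p k / (n - k : ℕ) =
      ∑ k ∈ Ico 1 n, binomialWeight n (1 - p) k / k := by
  have h := sum_Ico_reflect (fun k => binomialWeight n (1 - p) k / k) 1 (Nat.le_succ n)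
  rw [Nat.add_sub_cancel, Nat.add_sub_cancel_left] at h
  rw [← h]
  refine sum_congr rfl fun k hk => ?_
  have hkn : k ≤ n := (mem_Ico.mp hk).2.le
  unfold binomialWeight
  rw [Nat.choose_symm hkn, Nat.sub_sub_self hkn, sub_sub_cancel]
  ring

end binomialWeight

end

theorem stmt_16 (p : ℝ) (hp0 : 0 < p) (hp1 : p < 1) (A : ℕ) (hA : 2 ≤ A)
    (a b : ℝ) (ha : 0 ≤ a) (hb : 0 ≤ b) :
    1 - (1 - p) ^ A - p ^ A - 2 * a / (p * A) - 2 * b / ((1 - p) * A)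
      ≤ ∑ k ∈ Finset.Ico 1 A, (A.choose k : ℝ) * p ^ k * (1 - p) ^ (A - k) *
          (1 - a / (k : ℝ)) * (1 - b / ((A - k : ℕ) : ℝ)) := by
  set w := binomialWeight A p
  have hmass : ∑ k ∈ Ico 1 A, w k = 1 - (1 - p) ^ A - p ^ A :=
    binomialWeight.sum_Ico_one (by omega) p
  have hleft : ∑ k ∈ Ico 1 A, w k / k ≤ 2 / (p * A) :=
    binomialWeight.sum_Ico_div_le hp0 hp1.le A
  have hright : ∑ k ∈ Ico 1 A, w k / (A - k : ℕ) ≤ 2 / ((1 - p) * A) := by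
    rw [binomialWeight.sum_Ico_div_sub_eq]
    exact binomialWeight.sum_Ico_div_le (by linarith) (by linarith) A
  have hterm : ∀ k ∈ Ico 1 A, w k - a * (w k / k) - b * (w k / (A - k : ℕ)) ≤
      w k * (1 - a / k) * (1 - b / (A - k : ℕ)) := fun k _ => by
    have hw := binomialWeight.nonneg (n := A) hp0.le hp1.le k
    have hx : 0 ≤ a / k := by positivity
    have hy : 0 ≤ b / (A - k : ℕ) := by positivity
    rw [mul_div_left_comm a, mul_div_left_comm b]
    nlinarith [mul_nonneg (mul_nonneg hw hx) hy]
  calc 1 - (1 - p) ^ A - p ^ A - 2 * a / (p * A) - 2 * b / ((1 - p) * A)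
      ≤ ∑ k ∈ Ico 1 A, w k - a * ∑ k ∈ Ico 1 A, w k / k
          - b * ∑ k ∈ Ico 1 A, w k / (A - k : ℕ) := by
        rw [hmass, mul_comm 2 a, mul_comm 2 b, mul_div_assoc, mul_div_assoc]
        nlinarith [mul_le_mul_of_nonneg_left hleft ha, mul_le_mul_of_nonneg_left hright hb]
    _ = ∑ k ∈ Ico 1 A, (w k - a * (w k / k) - b * (w k / (A - k : ℕ))) := by
        rw [sum_sub_distrib, sum_sub_distrib, mul_sum, mul_sum]
    _ ≤ _ := sum_le_sum hterm
end
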